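/- arXiv:1304.5831 — 2 statements merged into one kernel-verified Lean document; each statement's English description precedes it below -/
import Mathlib

section
/- Let (f,g) ∈ 𝒜 satisfy the single overlapping property (So) and the hole property (Ho), with hole intervals H_f, H_g. Then the unique minimal set K of ⟨f,g⟩₊ satisfies K ⊆ I \ int(H_f ∪ H_g); in particular K does not coincide with the whole interval I. -/
/-!
The open holes `U = int Hf ∪ int Hg` are backward invariant on `I`: `f` maps `I` below `Hg`, and
it maps `Hg` monotonically onto `Hf`, so `f y ∈ U` forces `y ∈ int Hg`; symmetrically for `g`.
Hence `I \ U` is a closed set invariant under `⟨f,g⟩₊`. It contains `f (f x)` for every `x ∈ I`,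
since that point lies below `Hf`, so by minimality `K`, the orbit closure of such a point, lies in
`I \ U`.
-/

open Set Function MeasureTheory

noncomputable section

namespace IFSPaper

/-- The closed unit interval `I = [0,1]` as a subset of `ℝ`. -/
def unitI : Set ℝ := Set.Icc 0 1

/-- Membership in the class `𝒜`: `f, g : I → I` are `C¹` diffeomorphisms onto their
images with `f 0 = 0`, `g 1 = 1`, `f x < x < g x` on `(0,1)` and `0 < g 0 < f 1 < 1`. -/
structure MemA (f g : ℝ → ℝ) : Prop where
  f_maps : Set.MapsTo f unitI unitI
  g_maps : Set.MapsTo g unitI unitI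
  f_c1 : ContDiff ℝ 1 f
  g_c1 : ContDiff ℝ 1 g
  f_inj : Set.InjOn f unitI
  g_inj : Set.InjOn g unitI
  f_deriv_ne : ∀ x ∈ unitI, deriv f x ≠ 0
  g_deriv_ne : ∀ x ∈ unitI, deriv g x ≠ 0
  f_zero : f 0 = 0
  g_one : g 1 = 1
  f_lt_id : ∀ x ∈ Set.Ioo (0:ℝ) 1, f x < x
  id_lt_g : ∀ x ∈ Set.Ioo (0:ℝ) 1, x < g x
  g0_pos : 0 < g 0
  g0_lt_f1 : g 0 < f 1
  f1_lt_one : f 1 < 1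

/-- The element of the semigroup `⟨f,g⟩₊` associated to a word in the two generators
(`true ↦ f`, `false ↦ g`). -/
def word (f g : ℝ → ℝ) : List Bool → ℝ → ℝ
  | [] => id
  | b :: t => (if b then f else g) ∘ word f g t

/-- The semigroup orbit `O₊(x) = {φ x : φ ∈ ⟨f,g⟩₊}` of a point `x`. -/
def orbitP (f g : ℝ → ℝ) (x : ℝ) : Set ℝ :=
  {y | ∃ w : List Bool, w ≠ [] ∧ word f g w x = y}

/-- `K` is a minimal set for the action of `⟨f,g⟩₊` on `I`. -/
def IsMinimalSet (f g : ℝ → ℝ) (K : Set ℝ) : Prop :=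
  K.Nonempty ∧ K ⊆ unitI ∧ ∀ x ∈ K, closure (orbitP f g x) = K

/-- The overlapping region `W = [g 0, f 1]`. -/
def ovW (f g : ℝ → ℝ) : Set ℝ := Set.Icc (g 0) (f 1)

/-- The fundamental domain `Fₙ = [f^[n+1] 1, f^[n] 1]`. -/
def Fint (f : ℝ → ℝ) (n : ℕ) : Set ℝ := Set.Icc (f^[n+1] 1) (f^[n] 1)

/-- The fundamental domain `Gₙ = [g^[n] 0, g^[n+1] 0]`. -/
def Gint (g : ℝ → ℝ) (n : ℕ) : Set ℝ := Set.Icc (g^[n] 0) (g^[n+1] 0)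

/-- Single overlapping property `So`: `f² 1 < g 0` and `f 1 < g² 0`. -/
def So (f g : ℝ → ℝ) : Prop := f (f 1) < g 0 ∧ f 1 < g (g 0)

/-- A (nonempty) closed bounded interval. -/
def IsClosedInterval (A : Set ℝ) : Prop := ∃ a b : ℝ, a ≤ b ∧ A = Set.Icc a b

/-- A closed bounded interval with nonempty interior. -/
def IsNondegClosedInterval (A : Set ℝ) : Prop := ∃ a b : ℝ, a < b ∧ A = Set.Icc a b

/-- A nonempty open bounded interval. -/
def IsOpenInterval (J : Set ℝ) : Prop := ∃ a b : ℝ, a < b ∧ J = Set.Ioo a b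

/-- Hole property `Ho` witnessed by the pair of holes `(Hf, Hg)`. -/
def HoleAt (f g : ℝ → ℝ) (Hf Hg : Set ℝ) : Prop :=
  IsNondegClosedInterval Hf ∧ IsNondegClosedInterval Hg ∧
  Hf ⊆ interior (Fint f 1 \ ovW f g) ∧
  Hg ⊆ interior (Gint g 1 \ ovW f g) ∧
  g '' Hf = Hg ∧ f '' Hg = Hf

/-- Hole property `Ho`. -/
def Ho (f g : ℝ → ℝ) : Prop := ∃ Hf Hg : Set ℝ, HoleAt f g Hf Hg

/-- The induced (first-return) map `𝓕 : F₁ \ {f 1} → G₁`,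
`𝓕 x = g^[-n x] (f⁻¹ x)` where `n x` is least with `g^[-n x] (f⁻¹ x) ∈ G₁`. -/
def calF (f g : ℝ → ℝ) (x : ℝ) : ℝ :=
  (Function.invFunOn g unitI)^[sInf {n : ℕ |
      (Function.invFunOn g unitI)^[n] (Function.invFunOn f unitI x) ∈ Gint g 1}]
    (Function.invFunOn f unitI x)

/-- The induced (first-return) map `𝓖 : G₁ \ {g 0} → F₁`. -/
def calG (f g : ℝ → ℝ) (x : ℝ) : ℝ :=
  (Function.invFunOn f unitI)^[sInf {n : ℕ |
      (Function.invFunOn f unitI)^[n] (Function.invFunOn g unitI x) ∈ Fint f 1}]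
    (Function.invFunOn g unitI x)

/-- Eventual expansion property `Ee`: `𝓕` is uniformly expanding outside `Hf`
and `𝓖` outside `Hg` (at all points where the derivative makes sense). -/
def Ee (f g : ℝ → ℝ) (Hf Hg : Set ℝ) : Prop :=
  ∃ μ : ℝ, 1 < μ ∧
    (∀ y ∈ Fint f 1 \ Hf, DifferentiableAt ℝ (calF f g) y → μ < deriv (calF f g) y) ∧
    (∀ y ∈ Gint g 1 \ Hg, DifferentiableAt ℝ (calG f g) y → μ < deriv (calG f g) y)

/-- The ruination region `R_f = 𝓕⁻¹(Hg) ⊆ F₁`. -/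
def Rf (f g : ℝ → ℝ) (Hg : Set ℝ) : Set ℝ :=
  {x | x ∈ Fint f 1 \ {f 1} ∧ calF f g x ∈ Hg}

/-- The ruination region `R_g = 𝓖⁻¹(Hf) ⊆ G₁`. -/
def Rg (f g : ℝ → ℝ) (Hf : Set ℝ) : Set ℝ :=
  {x | x ∈ Gint g 1 \ {g 0} ∧ calG f g x ∈ Hf}

/-- Castration property `Ca`: `W ⊆ int R_f ∪ int R_g`. -/
def Ca (f g : ℝ → ℝ) (Hf Hg : Set ℝ) : Prop :=
  ovW f g ⊆ interior (Rf f g Hg) ∪ interior (Rg f g Hf)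

/-- Membership in the class `𝒞` with the given holes `(Hf, Hg)`:
`(f,g) ∈ 𝒜` together with `So`, `Ho`, `Ee` and `Ca`. -/
def MemC (f g : ℝ → ℝ) (Hf Hg : Set ℝ) : Prop :=
  MemA f g ∧ So f g ∧ HoleAt f g Hf Hg ∧ Ee f g Hf Hg ∧ Ca f g Hf Hg

/-- The interval `I₋₁ = [0, 1/3 - ε]` of the appendix example. -/
def Im1 (ε : ℝ) : Set ℝ := Set.Icc 0 (1/3 - ε)

/-- The interval `I₀ = [1/3 + ε, 2/3 - ε]` of the appendix example. -/
def Iz (ε : ℝ) : Set ℝ := Set.Icc (1/3 + ε) (2/3 - ε)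

/-- The interval `I₁ = [2/3 + ε, 1]` of the appendix example. -/
def Ip1 (ε : ℝ) : Set ℝ := Set.Icc (2/3 + ε) 1

/-- The inclusion property of the appendix example. -/
def InclusionProp (f g : ℝ → ℝ) (ε : ℝ) : Prop :=
  f '' Im1 ε ⊆ Im1 ε ∧ f '' Iz ε ⊆ interior (Im1 ε) ∧ f '' Ip1 ε ⊆ interior (Iz ε) ∧
  g '' Ip1 ε ⊆ Ip1 ε ∧ g '' Iz ε ⊆ interior (Ip1 ε) ∧ g '' Im1 ε ⊆ interior (Iz ε)

/-- The strong uniform contraction property of the appendix example. -/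
def StrongContraction (f g : ℝ → ℝ) (ε lam : ℝ) : Prop :=
  ∀ x ∈ Im1 ε ∪ Iz ε ∪ Ip1 ε, deriv f x < lam ∧ deriv g x < lam


theorem monotoneOn_Icc_of_deriv_ne_zero {f : ℝ → ℝ} {p q : ℝ} (hf : Differentiable ℝ f)
    (hne : ∀ x ∈ Icc p q, deriv f x ≠ 0) (hpq : p ≤ q) (hlt : f p < f q) :
    MonotoneOn f (Icc p q) := by
  rcases hasDerivWithinAt_forall_lt_or_forall_gt_of_forall_ne (convex_Icc p q)
    (fun x _ => (hf x).hasDerivAt.hasDerivWithinAt) hne with hneg | hpos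
  · have hanti : StrictAntiOn f (Icc p q) := strictAntiOn_of_deriv_neg (convex_Icc p q)
      hf.continuous.continuousOn fun x hx => hneg x (interior_subset hx)
    have hpq' : p < q := hpq.lt_of_ne (by rintro rfl; exact hlt.false)
    exact absurd hlt (hanti ⟨le_rfl, hpq⟩ ⟨hpq, le_rfl⟩ hpq').not_gt
  · exact (strictMonoOn_of_deriv_pos (convex_Icc p q) hf.continuous.continuousOn
      fun x hx => hpos x (interior_subset hx)).monotoneOn

theorem mem_Ioo_of_apply_mem_Ioo {α β : Type*} [LinearOrder α] [Preorder β] {f : α → β}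
    {s : Set α} {a b : β} {c d y : α} (hf : MonotoneOn f s) (hs : Icc c d ⊆ s)
    (himg : f '' Icc c d = Icc a b) (hy : y ∈ s) (hfy : f y ∈ Ioo a b) : y ∈ Ioo c d := by
  have hab : a ≤ b := hfy.1.le.trans hfy.2.le
  constructor
  · by_contra! hyc
    obtain ⟨z, hz, hza⟩ : a ∈ f '' Icc c d := himg ▸ left_mem_Icc.2 hab
    exact lt_irrefl a (hfy.1.trans_le ((hf hy (hs hz) (hyc.trans hz.1)).trans_eq hza))
  · by_contra! hdy
    obtain ⟨z, hz, hzb⟩ : b ∈ f '' Icc c d := himg ▸ right_mem_Icc.2 hab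
    exact lt_irrefl b ((hzb.symm.trans_le (hf (hs hz) hy (hz.2.trans hdy))).trans_lt hfy.2)

theorem interior_Icc_union_Icc_of_lt {α : Type*} [LinearOrder α] [TopologicalSpace α]
    [OrderTopology α] [DenselyOrdered α] [NoMinOrder α] [NoMaxOrder α] {a b c d : α}
    (h : b < c) : interior (Icc a b ∪ Icc c d) = Ioo a b ∪ Ioo c d := by
  rw [interior_union_of_disjoint_closure, interior_Icc, interior_Icc]
  rw [closure_Icc, closure_Icc]
  exact disjoint_left.2 fun _ hy hy' => (h.trans_le hy'.1).not_ge hy.2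

section Semigroup

variable {f g : ℝ → ℝ}

theorem mapsTo_word {t : Set ℝ} (hf : MapsTo f t t) (hg : MapsTo g t t) :
    ∀ w : List Bool, MapsTo (word f g w) t t
  | [] => mapsTo_id t
  | true :: w => hf.comp (mapsTo_word hf hg w)
  | false :: w => hg.comp (mapsTo_word hf hg w)

theorem IsMinimalSet.word_mem {K : Set ℝ} (hK : IsMinimalSet f g K) {x : ℝ} (hx : x ∈ K)
    {w : List Bool} (hw : w ≠ []) : word f g w x ∈ K := by
  rw [← hK.2.2 x hx]
  exact subset_closure ⟨w, hw, rfl⟩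

theorem IsMinimalSet.subset_of_mapsTo {K t : Set ℝ} (hK : IsMinimalSet f g K)
    (ht : IsClosed t) (hf : MapsTo f t t) (hg : MapsTo g t t) {x : ℝ} (hxK : x ∈ K)
    (hxt : x ∈ t) : K ⊆ t := by
  rw [← hK.2.2 x hxK]
  refine closure_minimal ?_ ht
  rintro _ ⟨w, -, rfl⟩
  exact mapsTo_word hf hg w hxt

end Semigroup

section Holes

variable {f g : ℝ → ℝ} {a b c d : ℝ}

theorem MemA.monotoneOn_f (hA : MemA f g) : MonotoneOn f unitI :=
  monotoneOn_Icc_of_deriv_ne_zero (hA.f_c1.differentiable one_ne_zero) hA.f_deriv_ne zero_le_one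
    (by linarith [hA.f_zero, hA.g0_pos, hA.g0_lt_f1])

theorem MemA.monotoneOn_g (hA : MemA f g) : MonotoneOn g unitI :=
  monotoneOn_Icc_of_deriv_ne_zero (hA.g_c1.differentiable one_ne_zero) hA.g_deriv_ne zero_le_one
    (by linarith [hA.g_one, hA.g0_lt_f1, hA.f1_lt_one])

theorem subset_Ioo_of_subset_interior_Fint_diff {Hf : Set ℝ}
    (h : Hf ⊆ interior (Fint f 1 \ ovW f g)) : Hf ⊆ Ioo (f (f 1)) (g 0) := by
  intro y hy
  have hF : y ∈ Ioo (f (f 1)) (f 1) := by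
    simpa [Fint] using interior_mono sdiff_subset (h hy)
  have hW : y ∉ ovW f g := (interior_subset (h hy)).2
  exact ⟨hF.1, lt_of_not_ge fun hge => hW ⟨hge, hF.2.le⟩⟩

theorem subset_Ioo_of_subset_interior_Gint_diff {Hg : Set ℝ}
    (h : Hg ⊆ interior (Gint g 1 \ ovW f g)) : Hg ⊆ Ioo (f 1) (g (g 0)) := by
  intro y hy
  have hG : y ∈ Ioo (g 0) (g (g 0)) := by
    simpa [Gint] using interior_mono sdiff_subset (h hy)
  have hW : y ∉ ovW f g := (interior_subset (h hy)).2
  exact ⟨lt_of_not_ge fun hle => hW ⟨hG.1.le, hle⟩, hG.2⟩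

theorem MemA.mapsTo_f_diff_holes (hA : MemA f g) (hHg : Icc c d ⊆ unitI)
    (hfHg : f '' Icc c d = Icc a b) (hc : f 1 < c) :
    MapsTo f (unitI \ (Ioo a b ∪ Ioo c d)) (unitI \ (Ioo a b ∪ Ioo c d)) := by
  rintro y ⟨hy, hyU⟩
  refine ⟨hA.f_maps hy, ?_⟩
  rintro (hfy | hfy)
  · exact hyU (Or.inr (mem_Ioo_of_apply_mem_Ioo hA.monotoneOn_f hHg hfHg hy hfy))
  · have : f y ≤ f 1 := hA.monotoneOn_f hy ⟨zero_le_one, le_rfl⟩ hy.2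
    linarith [hfy.1]

theorem MemA.mapsTo_g_diff_holes (hA : MemA f g) (hHf : Icc a b ⊆ unitI)
    (hgHf : g '' Icc a b = Icc c d) (hb : b < g 0) :
    MapsTo g (unitI \ (Ioo a b ∪ Ioo c d)) (unitI \ (Ioo a b ∪ Ioo c d)) := by
  rintro y ⟨hy, hyU⟩
  refine ⟨hA.g_maps hy, ?_⟩
  rintro (hgy | hgy)
  · have : g 0 ≤ g y := hA.monotoneOn_g ⟨le_rfl, zero_le_one⟩ hy hy.1
    linarith [hgy.2]
  · exact hyU (Or.inl (mem_Ioo_of_apply_mem_Ioo hA.monotoneOn_g hHf hgHf hy hgy))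

end Holes

theorem minimal_set_avoids_holes_general (f g : ℝ → ℝ) (Hf Hg K : Set ℝ)
    (hA : MemA f g) (hHo : HoleAt f g Hf Hg)
    (hK : IsMinimalSet f g K) :
    K ⊆ unitI \ interior (Hf ∪ Hg) ∧ K ≠ unitI := by
  obtain ⟨⟨a, b, hab, rfl⟩, ⟨c, d, hcd, rfl⟩, hHf, hHg, hgHf, hfHg⟩ := hHo
  obtain ⟨ha, hb⟩ := (Icc_subset_Ioo_iff hab.le).1 (subset_Ioo_of_subset_interior_Fint_diff hHf)
  obtain ⟨hc, hd⟩ := (Icc_subset_Ioo_iff hcd.le).1 (subset_Ioo_of_subset_interior_Gint_diff hHg)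
  have h1 : (1 : ℝ) ∈ unitI := ⟨zero_le_one, le_rfl⟩
  have h0 : (0 : ℝ) ∈ unitI := ⟨le_rfl, zero_le_one⟩
  have hHfI : Icc a b ⊆ unitI := Icc_subset_Icc ((hA.f_maps (hA.f_maps h1)).1.trans ha.le)
    (hb.le.trans (hA.g_maps h0).2)
  have hHgI : Icc c d ⊆ unitI := Icc_subset_Icc ((hA.f_maps h1).1.trans hc.le)
    (hd.le.trans (hA.g_maps (hA.g_maps h0)).2)
  obtain ⟨x, hx⟩ := hK.1
  have hxI : x ∈ unitI := hK.2.1 hx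
  have hffx : f (f x) ∈ unitI \ (Ioo a b ∪ Ioo c d) := by
    have : f (f x) ≤ f (f 1) :=
      hA.monotoneOn_f (hA.f_maps hxI) (hA.f_maps h1) (hA.monotoneOn_f hxI h1 hxI.2)
    refine ⟨hA.f_maps (hA.f_maps hxI), ?_⟩
    rintro (hU | hU) <;> linarith [hU.1, hab, hA.g0_lt_f1]
  have hKsub : K ⊆ unitI \ (Ioo a b ∪ Ioo c d) :=
    hK.subset_of_mapsTo (isClosed_Icc.sdiff (isOpen_Ioo.union isOpen_Ioo))
      (hA.mapsTo_f_diff_holes hHgI hfHg hc) (hA.mapsTo_g_diff_holes hHfI hgHf hb)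
      (hK.word_mem hx (w := [true, true]) (List.cons_ne_nil _ _)) hffx
  rw [interior_Icc_union_Icc_of_lt (hb.trans (hA.g0_lt_f1.trans hc))]
  refine ⟨hKsub, fun hKI => ?_⟩
  have hmid : (a + b) / 2 ∈ Ioo a b := ⟨by linarith, by linarith⟩
  exact (hKsub (hKI ▸ hHfI (Ioo_subset_Icc_self hmid))).2 (Or.inl hmid)

/-- if `(f,g) ∈ 𝒜` satisfies `So` and `Ho` with holes `Hf, Hg`, then the
minimal set `K` is contained in `I \ int (Hf ∪ Hg)`; in particular `K ≠ I`. -/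
theorem minimal_set_avoids_holes (f g : ℝ → ℝ) (Hf Hg K : Set ℝ)
    (hA : MemA f g) (hSo : So f g) (hHo : HoleAt f g Hf Hg)
    (hK : IsMinimalSet f g K) :
    K ⊆ unitI \ interior (Hf ∪ Hg) ∧ K ≠ unitI :=
  minimal_set_avoids_holes_general f g Hf Hg K hA hHo hK

end IFSPaper
end
end

section
/- If (f,g) ∈ 𝒞, then the unique minimal set K of ⟨f,g⟩₊ has empty interior in ℝ; more precisely, for every x∈K and every nonempty open interval J⊆I containing x, there exists a nonempty open interval L⊆J with L∩K=∅. -/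
open Set Function MeasureTheory

noncomputable section

namespace IFSPaper

/-!
Write `a = g 0` and `b = f 1`. The orbit of `0` is dense in `K` and avoids the forward images of
the holes, because every preimage of a point of `Hf = f '' Hg` or `Hg = g '' Hf` lies in a hole.
So no orbit point lying in `(0, a)` or in `R_g` is a `g`-image of an orbit point, and near such
points `K` is invariant under the inverse branch of `f`; symmetrically for `(b, 1)`, `R_f` and `g`.
Pulling back along these branches, an interval of `K` abutting `0` or `a` would reach the interior
of `Hf`, and one abutting `b` or `1` the interior of `Hg`; by `Ca`, an interval of `K` inside `W`
lies in `R_f` or in `R_g`. Hence an interval of `K`, moved into `G₁` or `F₁` by `g` or `f`, is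
"good", and `𝓕` (or `𝓖`) maps it onto an interval of `K` that is good again and longer by the
factor `μ > 1` of `Ee`. Iterating contradicts `K ⊆ [0, 1]`.
-/

open Filter Topology

variable {f g : ℝ → ℝ} {Hf Hg K : Set ℝ}

lemma StrictMonoOn.iterate {α : Type*} [Preorder α] {φ : α → α} {s : Set α}
    (h : StrictMonoOn φ s) (hs : MapsTo φ s s) (n : ℕ) : StrictMonoOn φ^[n] s := by
  induction n with
  | zero => exact strictMonoOn_id
  | succ n ih =>
    rw [iterate_succ']
    exact h.comp ih (hs.iterate n)

lemma contDiff_iterate {φ : ℝ → ℝ} {n : WithTop ℕ∞} (h : ContDiff ℝ n φ) (k : ℕ) :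
    ContDiff ℝ n φ^[k] := by
  induction k with
  | zero => exact contDiff_id
  | succ k ih =>
    rw [iterate_succ']
    exact h.comp ih

lemma zero_mem_unitI : (0 : ℝ) ∈ unitI := left_mem_Icc.2 zero_le_one

lemma one_mem_unitI : (1 : ℝ) ∈ unitI := right_mem_Icc.2 zero_le_one

lemma Ioo_subset_unitI {x y : ℝ} (hx : 0 ≤ x) (hy : y ≤ 1) : Ioo x y ⊆ unitI :=
  Ioo_subset_Icc_self.trans (Icc_subset_Icc hx hy)

namespace MemA

lemma continuous_f (hA : MemA f g) : Continuous f := hA.f_c1.continuous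

lemma continuous_g (hA : MemA f g) : Continuous g := hA.g_c1.continuous

lemma strictMonoOn_f (hA : MemA f g) : StrictMonoOn f unitI :=
  hA.continuous_f.continuousOn.strictMonoOn_of_injOn_Icc zero_le_one
    (by linarith [hA.f_zero, hA.g0_pos, hA.g0_lt_f1]) hA.f_inj

lemma strictMonoOn_g (hA : MemA f g) : StrictMonoOn g unitI :=
  hA.continuous_g.continuousOn.strictMonoOn_of_injOn_Icc zero_le_one
    (by linarith [hA.g_one, hA.g0_lt_f1, hA.f1_lt_one]) hA.g_inj

lemma f_lt (hA : MemA f g) {x : ℝ} (hx : x ∈ unitI) (h0 : 0 < x) : f x < x := by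
  rcases hx.2.lt_or_eq with h1 | rfl
  · exact hA.f_lt_id x ⟨h0, h1⟩
  · exact hA.f1_lt_one

lemma lt_g (hA : MemA f g) {x : ℝ} (hx : x ∈ unitI) (h1 : x < 1) : x < g x := by
  rcases hx.1.lt_or_eq with h0 | rfl
  · exact hA.id_lt_g x ⟨h0, h1⟩
  · exact hA.g0_pos

lemma f_le (hA : MemA f g) {x : ℝ} (hx : x ∈ unitI) : f x ≤ x := by
  rcases hx.1.lt_or_eq with h0 | rfl
  · exact (hA.f_lt hx h0).le
  · exact hA.f_zero.le

lemma le_g (hA : MemA f g) {x : ℝ} (hx : x ∈ unitI) : x ≤ g x := by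
  rcases hx.2.lt_or_eq with h1 | rfl
  · exact (hA.lt_g hx h1).le
  · exact hA.g_one.ge

lemma f_pos (hA : MemA f g) {x : ℝ} (hx : x ∈ unitI) (h0 : 0 < x) : 0 < f x :=
  hA.f_zero ▸ hA.strictMonoOn_f zero_mem_unitI hx h0

lemma g_lt_one (hA : MemA f g) {x : ℝ} (hx : x ∈ unitI) (h1 : x < 1) : g x < 1 :=
  hA.g_one ▸ hA.strictMonoOn_g hx one_mem_unitI h1

lemma iterate_f_le (hA : MemA f g) {x : ℝ} (hx : x ∈ unitI) (n : ℕ) : f^[n] x ≤ x := by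
  induction n with
  | zero => rfl
  | succ n ih =>
    rw [iterate_succ_apply']
    exact (hA.f_le (hA.f_maps.iterate n hx)).trans ih

lemma le_iterate_g (hA : MemA f g) {x : ℝ} (hx : x ∈ unitI) (n : ℕ) : x ≤ g^[n] x := by
  induction n with
  | zero => rfl
  | succ n ih =>
    rw [iterate_succ_apply']
    exact ih.trans (hA.le_g (hA.g_maps.iterate n hx))

lemma iterate_f_pos (hA : MemA f g) {x : ℝ} (hx : x ∈ unitI) (h0 : 0 < x) (n : ℕ) :
    0 < f^[n] x :=
  iterate_fixed hA.f_zero n ▸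
    StrictMonoOn.iterate hA.strictMonoOn_f hA.f_maps n zero_mem_unitI hx h0

lemma iterate_g_lt_one (hA : MemA f g) {x : ℝ} (hx : x ∈ unitI) (h1 : x < 1) (n : ℕ) :
    g^[n] x < 1 :=
  iterate_fixed hA.g_one n ▸
    StrictMonoOn.iterate hA.strictMonoOn_g hA.g_maps n hx one_mem_unitI h1

lemma f_le_f_one (hA : MemA f g) {x : ℝ} (hx : x ∈ unitI) : f x ≤ f 1 :=
  hA.strictMonoOn_f.monotoneOn hx one_mem_unitI hx.2

lemma g_zero_le_g (hA : MemA f g) {x : ℝ} (hx : x ∈ unitI) : g 0 ≤ g x :=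
  hA.strictMonoOn_g.monotoneOn zero_mem_unitI hx hx.1

lemma f_one_pos (hA : MemA f g) : 0 < f 1 := hA.g0_pos.trans hA.g0_lt_f1

lemma g_zero_lt_one (hA : MemA f g) : g 0 < 1 := hA.g0_lt_f1.trans hA.f1_lt_one

lemma f_f_one_pos (hA : MemA f g) : 0 < f (f 1) := hA.f_pos (hA.f_maps one_mem_unitI) hA.f_one_pos

lemma f_f_one_lt (hA : MemA f g) : f (f 1) < f 1 := hA.f_lt (hA.f_maps one_mem_unitI) hA.f_one_pos

lemma g_zero_lt_g_g_zero (hA : MemA f g) : g 0 < g (g 0) :=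
  hA.lt_g (hA.g_maps zero_mem_unitI) hA.g_zero_lt_one

lemma g_g_zero_lt_one (hA : MemA f g) : g (g 0) < 1 :=
  hA.g_lt_one (hA.g_maps zero_mem_unitI) hA.g_zero_lt_one

lemma strictMonoOn_f_iterate_g (hA : MemA f g) (N : ℕ) :
    StrictMonoOn (fun x => f (g^[N] x)) unitI :=
  hA.strictMonoOn_f.comp (StrictMonoOn.iterate hA.strictMonoOn_g hA.g_maps N)
    (hA.g_maps.iterate N)

lemma strictMonoOn_g_iterate_f (hA : MemA f g) (M : ℕ) :
    StrictMonoOn (fun x => g (f^[M] x)) unitI :=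
  hA.strictMonoOn_g.comp (StrictMonoOn.iterate hA.strictMonoOn_f hA.f_maps M)
    (hA.f_maps.iterate M)

lemma contDiff_f_iterate_g (hA : MemA f g) (N : ℕ) : ContDiff ℝ 1 fun x => f (g^[N] x) :=
  hA.f_c1.comp (contDiff_iterate hA.g_c1 N)

lemma contDiff_g_iterate_f (hA : MemA f g) (M : ℕ) : ContDiff ℝ 1 fun x => g (f^[M] x) :=
  hA.g_c1.comp (contDiff_iterate hA.f_c1 M)

lemma tendsto_iterate_f (hA : MemA f g) {x : ℝ} (hx : x ∈ unitI) :
    Tendsto (fun n => f^[n] x) atTop (𝓝 0) := by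
  have hmem : ∀ n, f^[n] x ∈ unitI := fun n => hA.f_maps.iterate n hx
  have hanti : Antitone fun n => f^[n] x := antitone_nat_of_succ_le fun n => by
    rw [iterate_succ_apply']
    exact hA.f_le (hmem n)
  have hlim := tendsto_atTop_ciInf hanti ⟨0, by rintro _ ⟨n, rfl⟩; exact (hmem n).1⟩
  set L := ⨅ n, f^[n] x
  have hL : L ∈ unitI := isClosed_Icc.mem_of_tendsto hlim (Eventually.of_forall hmem)
  have hfix : f L = L := isFixedPt_of_tendsto_iterate hlim hA.continuous_f.continuousAt
  rcases hL.1.lt_or_eq with h0 | h0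
  · exact absurd hfix (hA.f_lt hL h0).ne
  · rwa [← h0] at hlim

lemma tendsto_iterate_g (hA : MemA f g) {x : ℝ} (hx : x ∈ unitI) :
    Tendsto (fun n => g^[n] x) atTop (𝓝 1) := by
  have hmem : ∀ n, g^[n] x ∈ unitI := fun n => hA.g_maps.iterate n hx
  have hmono : Monotone fun n => g^[n] x := monotone_nat_of_le_succ fun n => by
    rw [iterate_succ_apply']
    exact hA.le_g (hmem n)
  have hlim := tendsto_atTop_ciSup hmono ⟨1, by rintro _ ⟨n, rfl⟩; exact (hmem n).2⟩
  set L := ⨆ n, g^[n] x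
  have hL : L ∈ unitI := isClosed_Icc.mem_of_tendsto hlim (Eventually.of_forall hmem)
  have hfix : g L = L := isFixedPt_of_tendsto_iterate hlim hA.continuous_g.continuousAt
  rcases hL.2.lt_or_eq with h1 | h1
  · exact absurd hfix (hA.lt_g hL h1).ne'
  · rwa [h1] at hlim

end MemA

/-- `O₊(0) ∪ {0}`: the values at `0` of all words, the empty one included. -/
def zeroOrbit (f g : ℝ → ℝ) : Set ℝ := range fun w => word f g w 0

lemma zeroOrbit_subset_image (hf0 : f 0 = 0) :
    zeroOrbit f g ⊆ f '' zeroOrbit f g ∪ g '' zeroOrbit f g := by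
  rintro _ ⟨w, rfl⟩
  cases w with
  | nil => exact Or.inl ⟨0, ⟨[], rfl⟩, hf0⟩
  | cons b w => cases b with
    | true => exact Or.inl ⟨_, ⟨w, rfl⟩, rfl⟩
    | false => exact Or.inr ⟨_, ⟨w, rfl⟩, rfl⟩

lemma word_mem_unitI (hA : MemA f g) {x : ℝ} (hx : x ∈ unitI) (w : List Bool) :
    word f g w x ∈ unitI := by
  induction w with
  | nil => exact hx
  | cons b w ih => cases b with
    | true => exact hA.f_maps ih
    | false => exact hA.g_maps ih

lemma zeroOrbit_subset_unitI (hA : MemA f g) : zeroOrbit f g ⊆ unitI := by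
  rintro _ ⟨w, rfl⟩
  exact word_mem_unitI hA zero_mem_unitI w

lemma disjoint_zeroOrbit (hA : MemA f g) {S : Set ℝ} (h0 : (0 : ℝ) ∉ S)
    (hfS : ∀ x ∈ unitI, f x ∈ S → x ∈ S) (hgS : ∀ x ∈ unitI, g x ∈ S → x ∈ S) :
    Disjoint (zeroOrbit f g) S := by
  rw [disjoint_left]
  rintro _ ⟨w, rfl⟩
  induction w with
  | nil => exact h0
  | cons b w ih => cases b with
    | true => exact fun h => ih (hfS _ (word_mem_unitI hA zero_mem_unitI w) h)
    | false => exact fun h => ih (hgS _ (word_mem_unitI hA zero_mem_unitI w) h)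

lemma mem_closure_of_apply_mem_closure_image {α β : Type*} [TopologicalSpace α] [T2Space α]
    [TopologicalSpace β] [T2Space β] {φ : α → β} {C s : Set α} {x : α} (hC : IsCompact C)
    (hφ : ContinuousOn φ C) (hinj : InjOn φ C) (hs : s ⊆ C) (hx : x ∈ C)
    (h : φ x ∈ closure (φ '' s)) : x ∈ closure s := by
  have hcl : closure s ⊆ C := hC.isClosed.closure_subset_iff.2 hs
  have hcpt : IsCompact (closure s) := hC.of_isClosed_subset isClosed_closure hcl
  have himage : IsClosed (φ '' closure s) := (hcpt.image_of_continuousOn (hφ.mono hcl)).isClosed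
  obtain ⟨y, hy, hyx⟩ := himage.closure_subset_iff.2 (image_mono subset_closure) h
  rwa [hinj (hcl hy) hx hyx] at hy

namespace IsMinimalSet

lemma isClosed (hK : IsMinimalSet f g K) : IsClosed K := by
  obtain ⟨x, hx⟩ := hK.1
  rw [← hK.2.2 x hx]
  exact isClosed_closure

lemma f_mem (hK : IsMinimalSet f g K) {x : ℝ} (hx : x ∈ K) : f x ∈ K := by
  rw [← hK.2.2 x hx]
  exact subset_closure ⟨[true], List.cons_ne_nil _ _, rfl⟩

lemma g_mem (hK : IsMinimalSet f g K) {x : ℝ} (hx : x ∈ K) : g x ∈ K := by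
  rw [← hK.2.2 x hx]
  exact subset_closure ⟨[false], List.cons_ne_nil _ _, rfl⟩

lemma zero_mem (hK : IsMinimalSet f g K) (hA : MemA f g) : (0 : ℝ) ∈ K := by
  obtain ⟨x, hx⟩ := hK.1
  have hiter : ∀ n, f^[n] x ∈ K := fun n => by
    induction n with
    | zero => exact hx
    | succ n ih => rw [iterate_succ_apply']; exact hK.f_mem ih
  exact hK.isClosed.mem_of_tendsto (hA.tendsto_iterate_f (hK.2.1 hx))
    (Eventually.of_forall hiter)

lemma closure_zeroOrbit (hK : IsMinimalSet f g K) (hA : MemA f g) :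
    closure (zeroOrbit f g) = K := by
  have h0 := hK.zero_mem hA
  refine (closure_minimal ?_ hK.isClosed).antisymm ?_
  · rintro _ ⟨w, rfl⟩
    rcases eq_or_ne w [] with rfl | hw
    · exact h0
    · rw [← hK.2.2 0 h0]
      exact subset_closure ⟨w, hw, rfl⟩
  · rw [← hK.2.2 0 h0]
    exact closure_mono fun _ ⟨w, _, hw⟩ => ⟨w, hw⟩

lemma disjoint_of_isOpen (hK : IsMinimalSet f g K) (hA : MemA f g) {U : Set ℝ} (hU : IsOpen U)
    (h : Disjoint U (zeroOrbit f g)) : Disjoint U K :=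
  hK.closure_zeroOrbit hA ▸ h.closure_right hU

lemma mem_of_apply_mem (hK : IsMinimalSet f g K) (hA : MemA f g) {φ : ℝ → ℝ}
    (hφ : Continuous φ) (hinj : InjOn φ unitI) {x : ℝ} {U : Set ℝ} (hx : x ∈ unitI)
    (hφx : φ x ∈ K) (hU : IsOpen U) (hφxU : φ x ∈ U)
    (hsub : zeroOrbit f g ∩ U ⊆ φ '' zeroOrbit f g) : x ∈ K := by
  rw [← hK.closure_zeroOrbit hA] at hφx ⊢
  refine mem_closure_of_apply_mem_closure_image isCompact_Icc hφ.continuousOn hinj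
    (zeroOrbit_subset_unitI hA) hx (closure_mono ?_ (hU.inter_closure ⟨hφxU, hφx⟩))
  rw [inter_comm]
  exact hsub

lemma mem_of_f_mem (hK : IsMinimalSet f g K) (hA : MemA f g) {x : ℝ} {U : Set ℝ}
    (hx : x ∈ unitI) (hfx : f x ∈ K) (hU : IsOpen U) (hfxU : f x ∈ U)
    (hgU : ∀ z ∈ zeroOrbit f g, g z ∉ U) : x ∈ K := by
  refine hK.mem_of_apply_mem hA hA.continuous_f hA.f_inj hx hfx hU hfxU fun y ⟨hy, hyU⟩ => ?_
  rcases zeroOrbit_subset_image hA.f_zero hy with h | ⟨z, hz, rfl⟩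
  · exact h
  · exact absurd hyU (hgU z hz)

lemma mem_of_g_mem (hK : IsMinimalSet f g K) (hA : MemA f g) {x : ℝ} {U : Set ℝ}
    (hx : x ∈ unitI) (hgx : g x ∈ K) (hU : IsOpen U) (hgxU : g x ∈ U)
    (hfU : ∀ z ∈ zeroOrbit f g, f z ∉ U) : x ∈ K := by
  refine hK.mem_of_apply_mem hA hA.continuous_g hA.g_inj hx hgx hU hgxU fun y ⟨hy, hyU⟩ => ?_
  rcases zeroOrbit_subset_image hA.f_zero hy with ⟨z, hz, rfl⟩ | h
  · exact absurd hyU (hfU z hz)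
  · exact h

lemma mem_of_iterate_f_mem (hK : IsMinimalSet f g K) (hA : MemA f g) {n : ℕ} :
    ∀ {x : ℝ}, x ∈ unitI → f x < g 0 → f^[n] x ∈ K → x ∈ K := by
  induction n with
  | zero => exact fun _ _ h => h
  | succ n ih =>
    intro x hx hfx h
    have hfxK : f x ∈ K :=
      ih (hA.f_maps hx) ((hA.f_le (hA.f_maps hx)).trans_lt hfx) (by rwa [← iterate_succ_apply])
    exact hK.mem_of_f_mem hA hx hfxK isOpen_Iio hfx fun z hz =>
      not_lt.2 (hA.g_zero_le_g (zeroOrbit_subset_unitI hA hz))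

lemma mem_of_iterate_g_mem (hK : IsMinimalSet f g K) (hA : MemA f g) {n : ℕ} :
    ∀ {x : ℝ}, x ∈ unitI → f 1 < g x → g^[n] x ∈ K → x ∈ K := by
  induction n with
  | zero => exact fun _ _ h => h
  | succ n ih =>
    intro x hx hgx h
    have hgxK : g x ∈ K :=
      ih (hA.g_maps hx) (hgx.trans_le (hA.le_g (hA.g_maps hx))) (by rwa [← iterate_succ_apply])
    exact hK.mem_of_g_mem hA hx hgxK isOpen_Ioi hgx fun z hz =>
      not_lt.2 (hA.f_le_f_one (zeroOrbit_subset_unitI hA hz))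

end IsMinimalSet

namespace HoleAt

lemma subset_Ioo_f (hH : HoleAt f g Hf Hg) : Hf ⊆ Ioo (f (f 1)) (g 0) := by
  refine hH.2.2.1.trans ((interior_mono ?_).trans interior_Ico.subset)
  exact fun x ⟨⟨h1, h2⟩, h3⟩ => ⟨h1, lt_of_not_ge fun h => h3 ⟨h, h2⟩⟩

lemma subset_Ioo_g (hH : HoleAt f g Hf Hg) : Hg ⊆ Ioo (f 1) (g (g 0)) := by
  refine hH.2.2.2.1.trans ((interior_mono ?_).trans interior_Ioc.subset)
  exact fun x ⟨⟨h1, h2⟩, h3⟩ => ⟨lt_of_not_ge fun h => h3 ⟨h1, h⟩, h2⟩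

lemma subset_unitI_f (hH : HoleAt f g Hf Hg) (hA : MemA f g) : Hf ⊆ unitI :=
  hH.subset_Ioo_f.trans (Ioo_subset_unitI hA.f_f_one_pos.le hA.g_zero_lt_one.le)

lemma subset_unitI_g (hH : HoleAt f g Hf Hg) (hA : MemA f g) : Hg ⊆ unitI :=
  hH.subset_Ioo_g.trans (Ioo_subset_unitI hA.f_one_pos.le hA.g_g_zero_lt_one.le)

end HoleAt

def holeSet (f g : ℝ → ℝ) (Hf Hg : Set ℝ) : Set ℝ := (⋃ m, f^[m] '' Hf) ∪ ⋃ m, g^[m] '' Hg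

/-- Every preimage in `I` of a point of `holeSet` lies in `holeSet`, because `f '' Hg = Hf` and
`g '' Hf = Hg`. -/
lemma disjoint_zeroOrbit_holeSet (hA : MemA f g) (hH : HoleAt f g Hf Hg) :
    Disjoint (zeroOrbit f g) (holeSet f g Hf Hg) := by
  have hHf := hH.subset_unitI_f hA
  have hHg := hH.subset_unitI_g hA
  simp only [holeSet]
  refine disjoint_zeroOrbit hA ?_ ?_ ?_ <;> simp only [mem_union, mem_iUnion, mem_image]
  · rintro (⟨m, z, hz, h⟩ | ⟨m, z, hz, h⟩)
    · exact (h ▸ hA.iterate_f_pos (hHf hz) (hA.f_f_one_pos.trans (hH.subset_Ioo_f hz).1) m).ne rfl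
    · linarith [hA.le_iterate_g (hHg hz) m, (hH.subset_Ioo_g hz).1, hA.f_one_pos]
  · rintro x hx (⟨m, z, hz, h⟩ | ⟨m, z, hz, h⟩)
    · cases m with
      | zero =>
        rw [← hH.2.2.2.2.2] at hz
        obtain ⟨y, hy, rfl⟩ := hz
        exact Or.inr ⟨0, y, hy, hA.f_inj (hHg hy) hx h⟩
      | succ m =>
        rw [iterate_succ_apply'] at h
        exact Or.inl ⟨m, z, hz, hA.f_inj (hA.f_maps.iterate m (hHf hz)) hx h⟩
    · linarith [hA.le_iterate_g (hHg hz) m, (hH.subset_Ioo_g hz).1, hA.f_le_f_one hx]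
  · rintro x hx (⟨m, z, hz, h⟩ | ⟨m, z, hz, h⟩)
    · linarith [hA.iterate_f_le (hHf hz) m, (hH.subset_Ioo_f hz).2, hA.g_zero_le_g hx]
    · cases m with
      | zero =>
        rw [← hH.2.2.2.2.1] at hz
        obtain ⟨y, hy, rfl⟩ := hz
        exact Or.inl ⟨0, y, hy, hA.g_inj (hHf hy) hx h⟩
      | succ m =>
        rw [iterate_succ_apply'] at h
        exact Or.inr ⟨m, z, hz, hA.g_inj (hA.g_maps.iterate m (hHg hz)) hx h⟩

namespace IsMinimalSet

lemma disjoint_interior_Hf (hK : IsMinimalSet f g K) (hA : MemA f g) (hH : HoleAt f g Hf Hg) :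
    Disjoint (interior Hf) K :=
  have hsub : interior Hf ⊆ holeSet f g Hf Hg := fun z hz =>
    Or.inl (mem_iUnion.2 ⟨0, z, interior_subset hz, rfl⟩)
  hK.disjoint_of_isOpen hA isOpen_interior
    ((disjoint_zeroOrbit_holeSet hA hH).symm.mono_left hsub)

lemma disjoint_interior_Hg (hK : IsMinimalSet f g K) (hA : MemA f g) (hH : HoleAt f g Hf Hg) :
    Disjoint (interior Hg) K :=
  have hsub : interior Hg ⊆ holeSet f g Hf Hg := fun z hz =>
    Or.inr (mem_iUnion.2 ⟨0, z, interior_subset hz, rfl⟩)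
  hK.disjoint_of_isOpen hA isOpen_interior
    ((disjoint_zeroOrbit_holeSet hA hH).symm.mono_left hsub)

lemma disjoint_Hf (hK : IsMinimalSet f g K) (hA : MemA f g) (hH : HoleAt f g Hf Hg)
    {U : Set ℝ} (hU : IsOpen U) (hUK : U ⊆ K) : Disjoint U Hf := by
  have hint := hK.disjoint_interior_Hf hA hH
  obtain ⟨h₁, h₂, h₁₂, rfl⟩ := hH.1
  rw [← closure_Ioo h₁₂.ne, ← interior_Icc]
  exact (hint.mono_right hUK).symm.closure_right hU

lemma disjoint_Hg (hK : IsMinimalSet f g K) (hA : MemA f g) (hH : HoleAt f g Hf Hg)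
    {U : Set ℝ} (hU : IsOpen U) (hUK : U ⊆ K) : Disjoint U Hg := by
  have hint := hK.disjoint_interior_Hg hA hH
  obtain ⟨h₁, h₂, h₁₂, rfl⟩ := hH.2.1
  rw [← closure_Ioo h₁₂.ne, ← interior_Icc]
  exact (hint.mono_right hUK).symm.closure_right hU

end IsMinimalSet

lemma invFunOn_iterate_apply_iterate {α : Type*} [Nonempty α] {φ : α → α} {s : Set α}
    (hinj : InjOn φ s) (hs : MapsTo φ s s) (n : ℕ) {x : α} (hx : x ∈ s) :
    (invFunOn φ s)^[n] (φ^[n] x) = x := by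
  induction n with
  | zero => rfl
  | succ n ih => rw [iterate_succ_apply' φ, iterate_succ_apply (invFunOn φ s),
      hinj.leftInvOn_invFunOn (hs.iterate n hx), ih]

lemma calF_f_iterate_g (hA : MemA f g) (N : ℕ) {x : ℝ} (hx : x ∈ Ioc (g 0) (g (g 0))) :
    calF f g (f (g^[N] x)) = x := by
  have hxI : x ∈ unitI := ⟨hA.g0_pos.le.trans hx.1.le, hx.2.trans hA.g_g_zero_lt_one.le⟩
  have hG := invFunOn_iterate_apply_iterate hA.g_inj hA.g_maps
  have hN : N ∈ {n | (invFunOn g unitI)^[n] (g^[N] x) ∈ Gint g 1} := by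
    change (invFunOn g unitI)^[N] (g^[N] x) ∈ Gint g 1
    rw [hG N hxI]
    exact Ioc_subset_Icc_self hx
  have hlt : ∀ j < N, j ∉ {n | (invFunOn g unitI)^[n] (g^[N] x) ∈ Gint g 1} := by
    intro j hj hjmem
    obtain ⟨k, rfl⟩ := Nat.exists_eq_add_of_lt hj
    change (invFunOn g unitI)^[j] (g^[j + (k + 1)] x) ∈ Gint g 1 at hjmem
    rw [iterate_add_apply, hG j (hA.g_maps.iterate _ hxI), iterate_succ_apply] at hjmem
    have := hA.le_iterate_g (hA.g_maps hxI) k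
    have hle : g^[k] (g x) ≤ g (g 0) := hjmem.2
    linarith [hA.strictMonoOn_g (hA.g_maps zero_mem_unitI) hxI hx.1]
  have hinf : sInf {n | (invFunOn g unitI)^[n] (g^[N] x) ∈ Gint g 1} = N :=
    (Nat.sInf_le hN).antisymm (le_csInf ⟨N, hN⟩ fun m hm => not_lt.1 fun h => hlt m h hm)
  rw [calF, hA.f_inj.leftInvOn_invFunOn (hA.g_maps.iterate N hxI), hinf, hG N hxI]

lemma calG_g_iterate_f (hA : MemA f g) (M : ℕ) {x : ℝ} (hx : x ∈ Ico (f (f 1)) (f 1)) :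
    calG f g (g (f^[M] x)) = x := by
  have hxI : x ∈ unitI := ⟨hA.f_f_one_pos.le.trans hx.1, hx.2.le.trans hA.f1_lt_one.le⟩
  have hF := invFunOn_iterate_apply_iterate hA.f_inj hA.f_maps
  have hM : M ∈ {n | (invFunOn f unitI)^[n] (f^[M] x) ∈ Fint f 1} := by
    change (invFunOn f unitI)^[M] (f^[M] x) ∈ Fint f 1
    rw [hF M hxI]
    exact Ico_subset_Icc_self hx
  have hlt : ∀ j < M, j ∉ {n | (invFunOn f unitI)^[n] (f^[M] x) ∈ Fint f 1} := by
    intro j hj hjmem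
    obtain ⟨k, rfl⟩ := Nat.exists_eq_add_of_lt hj
    change (invFunOn f unitI)^[j] (f^[j + (k + 1)] x) ∈ Fint f 1 at hjmem
    rw [iterate_add_apply, hF j (hA.f_maps.iterate _ hxI), iterate_succ_apply] at hjmem
    have := hA.iterate_f_le (hA.f_maps hxI) k
    have hle : f (f 1) ≤ f^[k] (f x) := hjmem.1
    linarith [hA.strictMonoOn_f hxI (hA.f_maps one_mem_unitI) hx.2]
  have hinf : sInf {n | (invFunOn f unitI)^[n] (f^[M] x) ∈ Fint f 1} = M :=
    (Nat.sInf_le hM).antisymm (le_csInf ⟨M, hM⟩ fun m hm => not_lt.1 fun h => hlt m h hm)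
  rw [calG, hA.g_inj.leftInvOn_invFunOn (hA.f_maps.iterate M hxI), hinf, hF M hxI]

lemma exists_eq_f_iterate_g (hA : MemA f g) {y : ℝ} (hy : y ∈ Ico (f (f 1)) (f 1)) :
    ∃ N, ∃ x ∈ Ioc (g 0) (g (g 0)), f (g^[N] x) = y := by
  classical
  have hlim : Tendsto (fun n => f (g^[n] (g (g 0)))) atTop (𝓝 (f 1)) :=
    (hA.continuous_f.tendsto 1).comp (hA.tendsto_iterate_g (hA.g_maps (hA.g_maps zero_mem_unitI)))
  have hex : ∃ n, y ≤ f (g^[n] (g (g 0))) :=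
    ((hlim.eventually_const_lt hy.2).exists).imp fun _ h => h.le
  refine ⟨Nat.find hex, ?_⟩
  have hlow : f (g^[Nat.find hex] (g 0)) < y := by
    rcases h : Nat.find hex with _ | k
    · exact (hA.strictMonoOn_f (hA.g_maps zero_mem_unitI) (hA.f_maps one_mem_unitI)
        hA.g0_lt_f1).trans_le hy.1
    · rw [iterate_succ_apply]
      exact not_le.1 (Nat.find_min hex (h ▸ k.lt_succ_self))
  exact intermediate_value_Ioc hA.g_zero_lt_g_g_zero.le
    (hA.contDiff_f_iterate_g _).continuous.continuousOn ⟨hlow, Nat.find_spec hex⟩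

lemma exists_eq_g_iterate_f (hA : MemA f g) {y : ℝ} (hy : y ∈ Ioc (g 0) (g (g 0))) :
    ∃ M, ∃ x ∈ Ico (f (f 1)) (f 1), g (f^[M] x) = y := by
  classical
  have hlim : Tendsto (fun n => g (f^[n] (f (f 1)))) atTop (𝓝 (g 0)) :=
    (hA.continuous_g.tendsto 0).comp (hA.tendsto_iterate_f (hA.f_maps (hA.f_maps one_mem_unitI)))
  have hex : ∃ n, g (f^[n] (f (f 1))) ≤ y :=
    ((hlim.eventually_lt_const hy.1).exists).imp fun _ h => h.le
  refine ⟨Nat.find hex, ?_⟩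
  have hhigh : y < g (f^[Nat.find hex] (f 1)) := by
    rcases h : Nat.find hex with _ | k
    · exact hy.2.trans_lt
        (hA.strictMonoOn_g (hA.g_maps zero_mem_unitI) (hA.f_maps one_mem_unitI) hA.g0_lt_f1)
    · rw [iterate_succ_apply]
      exact not_le.1 (Nat.find_min hex (h ▸ k.lt_succ_self))
  exact intermediate_value_Ico hA.f_f_one_lt.le
    (hA.contDiff_g_iterate_f _).continuous.continuousOn ⟨Nat.find_spec hex, hhigh⟩

lemma exists_of_mem_Rf (hA : MemA f g) {y : ℝ} (hy : y ∈ Rf f g Hg) :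
    ∃ N, ∃ z ∈ Hg, f (g^[N] z) = y := by
  obtain ⟨⟨hyF, hy1⟩, hyH⟩ := hy
  obtain ⟨N, x, hx, rfl⟩ := exists_eq_f_iterate_g hA ⟨hyF.1, hyF.2.lt_of_ne hy1⟩
  exact ⟨N, x, calF_f_iterate_g hA N hx ▸ hyH, rfl⟩

lemma exists_of_mem_Rg (hA : MemA f g) {y : ℝ} (hy : y ∈ Rg f g Hf) :
    ∃ M, ∃ z ∈ Hf, g (f^[M] z) = y := by
  obtain ⟨⟨hyG, hy0⟩, hyH⟩ := hy
  obtain ⟨M, x, hx, rfl⟩ := exists_eq_g_iterate_f hA ⟨hyG.1.lt_of_ne (Ne.symm hy0), hyG.2⟩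
  exact ⟨M, x, calG_g_iterate_f hA M hx ▸ hyH, rfl⟩

lemma f_notMem_Rf (hA : MemA f g) (hH : HoleAt f g Hf Hg) {x : ℝ} (hx : x ∈ zeroOrbit f g) :
    f x ∉ Rf f g Hg := fun h => by
  obtain ⟨N, z, hz, hzx⟩ := exists_of_mem_Rf hA h
  have hxz := hA.f_inj (hA.g_maps.iterate N (hH.subset_unitI_g hA hz))
    (zeroOrbit_subset_unitI hA hx) hzx
  exact (disjoint_zeroOrbit_holeSet hA hH).ne_of_mem hx (Or.inr (mem_iUnion.2 ⟨N, z, hz, rfl⟩))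
    hxz.symm

lemma g_notMem_Rg (hA : MemA f g) (hH : HoleAt f g Hf Hg) {x : ℝ} (hx : x ∈ zeroOrbit f g) :
    g x ∉ Rg f g Hf := fun h => by
  obtain ⟨M, z, hz, hzx⟩ := exists_of_mem_Rg hA h
  have hxz := hA.g_inj (hA.f_maps.iterate M (hH.subset_unitI_f hA hz))
    (zeroOrbit_subset_unitI hA hx) hzx
  exact (disjoint_zeroOrbit_holeSet hA hH).ne_of_mem hx (Or.inl (mem_iUnion.2 ⟨M, z, hz, rfl⟩))
    hxz.symm

lemma hasStrictDerivAt_calF (hA : MemA f g) (N : ℕ) {x : ℝ} (hx : x ∈ Ioo (g 0) (g (g 0)))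
    (hd : deriv (fun y => f (g^[N] y)) x ≠ 0) :
    HasStrictDerivAt (calF f g) (deriv (fun y => f (g^[N] y)) x)⁻¹ (f (g^[N] x)) :=
  ((hA.contDiff_f_iterate_g N).hasStrictDerivAt one_ne_zero).to_local_left_inverse hd
    (eventually_of_mem (Ioo_mem_nhds hx.1 hx.2) fun _ hy =>
      calF_f_iterate_g hA N (Ioo_subset_Ioc_self hy))

lemma hasStrictDerivAt_calG (hA : MemA f g) (M : ℕ) {x : ℝ} (hx : x ∈ Ioo (f (f 1)) (f 1))
    (hd : deriv (fun y => g (f^[M] y)) x ≠ 0) :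
    HasStrictDerivAt (calG f g) (deriv (fun y => g (f^[M] y)) x)⁻¹ (g (f^[M] x)) :=
  ((hA.contDiff_g_iterate_f M).hasStrictDerivAt one_ne_zero).to_local_left_inverse hd
    (eventually_of_mem (Ioo_mem_nhds hx.1 hx.2) fun _ hy =>
      calG_g_iterate_f hA M (Ioo_subset_Ico_self hy))

namespace IsMinimalSet

lemma not_Ioo_zero_subset (hK : IsMinimalSet f g K) (hA : MemA f g) (hH : HoleAt f g Hf Hg)
    {s : ℝ} (hs : 0 < s) : ¬ Ioo 0 s ⊆ K := by
  intro hsub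
  obtain ⟨h₁, h₂, h₁₂, hHf⟩ := hH.1
  have hz : (h₁ + h₂) / 2 ∈ interior Hf := by
    rw [hHf, interior_Icc]
    constructor <;> linarith
  have hzH := hH.subset_Ioo_f (interior_subset hz)
  have hzI := hH.subset_unitI_f hA (interior_subset hz)
  obtain ⟨n, hn⟩ := ((hA.tendsto_iterate_f hzI).eventually_lt_const hs).exists
  have hzK : (h₁ + h₂) / 2 ∈ K := hK.mem_of_iterate_f_mem hA hzI ((hA.f_le hzI).trans_lt hzH.2)
    (hsub ⟨hA.iterate_f_pos hzI (hA.f_f_one_pos.trans hzH.1) n, hn⟩)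
  exact (hK.disjoint_interior_Hf hA hH).ne_of_mem hz hzK rfl

lemma not_Ioo_subset_one (hK : IsMinimalSet f g K) (hA : MemA f g) (hH : HoleAt f g Hf Hg)
    {s : ℝ} (hs : s < 1) : ¬ Ioo s 1 ⊆ K := by
  intro hsub
  obtain ⟨h₁, h₂, h₁₂, hHg⟩ := hH.2.1
  have hz : (h₁ + h₂) / 2 ∈ interior Hg := by
    rw [hHg, interior_Icc]
    constructor <;> linarith
  have hzH := hH.subset_Ioo_g (interior_subset hz)
  have hzI := hH.subset_unitI_g hA (interior_subset hz)
  obtain ⟨n, hn⟩ := ((hA.tendsto_iterate_g hzI).eventually_const_lt hs).exists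
  have hzK : (h₁ + h₂) / 2 ∈ K := hK.mem_of_iterate_g_mem hA hzI (hzH.1.trans_le (hA.le_g hzI))
    (hsub ⟨hn, hA.iterate_g_lt_one hzI (hzH.2.trans hA.g_g_zero_lt_one) n⟩)
  exact (hK.disjoint_interior_Hg hA hH).ne_of_mem hz hzK rfl

lemma not_Ioo_g_zero_subset (hK : IsMinimalSet f g K) (hA : MemA f g) (hH : HoleAt f g Hf Hg)
    (hCa : Ca f g Hf Hg) {t : ℝ} (ht : g 0 < t) : ¬ Ioo (g 0) t ⊆ K := by
  intro hsub
  have hRf : g 0 ∈ interior (Rf f g Hg) :=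
    (hCa ⟨le_rfl, hA.g0_lt_f1.le⟩).resolve_right fun h => (interior_subset h).1.2 rfl
  obtain ⟨l, u, ⟨hl, hu⟩, hlu⟩ := mem_nhds_iff_exists_Ioo_subset.1 (mem_interior_iff_mem_nhds.1 hRf)
  have hRf' : Ioo (g 0) (min t u) ⊆ Rf f g Hg := fun y hy =>
    hlu ⟨hl.trans hy.1, hy.2.trans_le (min_le_right _ _)⟩
  obtain ⟨l', u', ⟨hl', hu'⟩, hlu'⟩ :=
    ((hA.continuous_g.tendsto 0).eventually_lt_const (lt_min ht hu)).exists_Ioo_subset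
  refine hK.not_Ioo_zero_subset hA hH (lt_min hu' one_pos) fun x hx => ?_
  have hxI : x ∈ unitI := ⟨hx.1.le, hx.2.le.trans (min_le_right _ _)⟩
  have hgx : g x ∈ Ioo (g 0) (min t u) :=
    ⟨hA.strictMonoOn_g zero_mem_unitI hxI hx.1,
      hlu' ⟨hl'.trans hx.1, hx.2.trans_le (min_le_left _ _)⟩⟩
  exact hK.mem_of_g_mem hA hxI (hsub ⟨hgx.1, hgx.2.trans_le (min_le_left _ _)⟩) isOpen_Ioo hgx
    fun z hz hfz => f_notMem_Rf hA hH hz (hRf' hfz)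

lemma not_Ioo_subset_f_one (hK : IsMinimalSet f g K) (hA : MemA f g) (hH : HoleAt f g Hf Hg)
    (hCa : Ca f g Hf Hg) {t : ℝ} (ht : t < f 1) : ¬ Ioo t (f 1) ⊆ K := by
  intro hsub
  have hRg : f 1 ∈ interior (Rg f g Hf) :=
    (hCa ⟨hA.g0_lt_f1.le, le_rfl⟩).resolve_left fun h => (interior_subset h).1.2 rfl
  obtain ⟨l, u, ⟨hl, hu⟩, hlu⟩ := mem_nhds_iff_exists_Ioo_subset.1 (mem_interior_iff_mem_nhds.1 hRg)
  have hRg' : Ioo (max t l) (f 1) ⊆ Rg f g Hf := fun y hy =>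
    hlu ⟨(le_max_right _ _).trans_lt hy.1, hy.2.trans hu⟩
  obtain ⟨l', u', ⟨hl', hu'⟩, hlu'⟩ :=
    ((hA.continuous_f.tendsto 1).eventually_const_lt (max_lt ht hl)).exists_Ioo_subset
  refine hK.not_Ioo_subset_one hA hH (max_lt hl' zero_lt_one) fun x hx => ?_
  have hxI : x ∈ unitI := ⟨(le_max_right _ _).trans hx.1.le, hx.2.le⟩
  have hfx : f x ∈ Ioo (max t l) (f 1) :=
    ⟨hlu' ⟨(le_max_left _ _).trans_lt hx.1, hx.2.trans hu'⟩,
      hA.strictMonoOn_f hxI one_mem_unitI hx.2⟩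
  exact hK.mem_of_f_mem hA hxI (hsub ⟨(le_max_left _ _).trans_lt hfx.1, hfx.2⟩) isOpen_Ioo hfx
    fun z hz hgz => g_notMem_Rg hA hH hz (hRg' hgz)

/-- No orbit point of `0` lies in `R_f ∩ R_g`, so an interval of `K` cannot meet both
interiors. -/
lemma subset_Rf_or_subset_Rg (hK : IsMinimalSet f g K) (hA : MemA f g) (hH : HoleAt f g Hf Hg)
    (hCa : Ca f g Hf Hg) {α β : ℝ} (hK' : Ioo α β ⊆ K) (hW : Ioo α β ⊆ ovW f g) :
    Ioo α β ⊆ Rf f g Hg ∨ Ioo α β ⊆ Rg f g Hf := by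
  have hRfg : Disjoint (interior (Rf f g Hg) ∩ interior (Rg f g Hf)) (zeroOrbit f g) := by
    rw [disjoint_right]
    intro y hy ⟨hf, hg⟩
    rcases zeroOrbit_subset_image hA.f_zero hy with ⟨z, hz, rfl⟩ | ⟨z, hz, rfl⟩
    · exact f_notMem_Rf hA hH hz (interior_subset hf)
    · exact g_notMem_Rg hA hH hz (interior_subset hg)
  have hdisj : Disjoint (interior (Rf f g Hg) ∩ Ioo α β) (interior (Rg f g Hf)) := by
    rw [disjoint_left]
    intro y ⟨hf, hy⟩ hg
    exact (hK.disjoint_of_isOpen hA (isOpen_interior.inter isOpen_interior) hRfg).ne_of_mem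
      ⟨hf, hg⟩ (hK' hy) rfl
  rcases isPreconnected_Ioo.subset_or_subset (isOpen_interior.inter isOpen_Ioo) isOpen_interior
    hdisj (fun y hy => (hCa (hW hy)).imp (fun h => ⟨h, hy⟩) id) with h | h
  · exact Or.inl fun y hy => interior_subset (h hy).1
  · exact Or.inr fun y hy => interior_subset (h hy)

end IsMinimalSet

/-- Intervals on which `𝓕` is expanding and near whose points every orbit point of `0` is an
`f`-image of one, so that `K` is invariant under the branch `𝓕`. -/
def GoodF (f g : ℝ → ℝ) (Hf : Set ℝ) (α β : ℝ) : Prop :=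
  Ioo α β ⊆ Ioo (f (f 1)) (f 1) ∧ Disjoint (Ioo α β) Hf ∧ ∀ z ∈ zeroOrbit f g, g z ∉ Ioo α β

def GoodG (f g : ℝ → ℝ) (Hg : Set ℝ) (α β : ℝ) : Prop :=
  Ioo α β ⊆ Ioo (g 0) (g (g 0)) ∧ Disjoint (Ioo α β) Hg ∧ ∀ z ∈ zeroOrbit f g, f z ∉ Ioo α β

namespace GoodF

variable {α β : ℝ}

lemma mem_of_apply_mem (hG : GoodF f g Hf α β) (hK : IsMinimalSet f g K) (hA : MemA f g)
    (hSo : So f g) (hK' : Ioo α β ⊆ K) {N : ℕ} {x : ℝ} (hx : x ∈ Ioo (g 0) 1)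
    (hψx : f (g^[N] x) ∈ Ioo α β) : x ∈ K := by
  have hxI : x ∈ unitI := ⟨hA.g0_pos.le.trans hx.1.le, hx.2.le⟩
  refine hK.mem_of_iterate_g_mem hA (n := N) hxI
    (hSo.2.trans (hA.strictMonoOn_g (hA.g_maps zero_mem_unitI) hxI hx.1)) ?_
  exact hK.mem_of_f_mem hA (hA.g_maps.iterate N hxI) (hK' hψx) isOpen_Ioo hψx hG.2.2

/-- The discontinuities `f (g^[N] (g 0))` of `𝓕` avoid a good interval of `K`, or `K` would
contain an interval `(g 0, t)`. -/
lemma breakpoint_notMem (hG : GoodF f g Hf α β) (hK : IsMinimalSet f g K) (hA : MemA f g)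
    (hSo : So f g) (hH : HoleAt f g Hf Hg) (hCa : Ca f g Hf Hg) (hK' : Ioo α β ⊆ K) (N : ℕ) :
    f (g^[N] (g 0)) ∉ Ico α β := by
  intro ⟨hα, hβ⟩
  have hψ := (hA.contDiff_f_iterate_g N).continuous.tendsto (g 0)
  obtain ⟨l, u, ⟨hl, hu⟩, hlu⟩ := (hψ.eventually_lt_const hβ).exists_Ioo_subset
  refine hK.not_Ioo_g_zero_subset hA hH hCa (lt_min hu hA.g_zero_lt_g_g_zero) fun x hx => ?_
  have hx1 : x < 1 := hx.2.trans_le (min_le_right _ _) |>.trans hA.g_g_zero_lt_one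
  have hxI : x ∈ unitI := ⟨hA.g0_pos.le.trans hx.1.le, hx1.le⟩
  exact hG.mem_of_apply_mem hK hA hSo hK' ⟨hx.1, hx1⟩
    ⟨hα.trans_lt (hA.strictMonoOn_f_iterate_g N (hA.g_maps zero_mem_unitI) hxI hx.1),
      hlu ⟨hl.trans hx.1, hx.2.trans_le (min_le_left _ _)⟩⟩

lemma exists_endpoints (hG : GoodF f g Hf α β) (hK : IsMinimalSet f g K) (hA : MemA f g)
    (hSo : So f g) (hH : HoleAt f g Hf Hg) (hCa : Ca f g Hf Hg) (hK' : Ioo α β ⊆ K)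
    (hαβ : α < β) : ∃ N A B, g 0 < A ∧ A < B ∧ B ≤ g (g 0) ∧
      f (g^[N] A) = α ∧ f (g^[N] B) = β := by
  have hy₀ : (α + β) / 2 ∈ Ioo α β := ⟨by linarith, by linarith⟩
  obtain ⟨N, x₀, hx₀, hψx₀⟩ := exists_eq_f_iterate_g hA (Ioo_subset_Ico_self (hG.1 hy₀))
  have hmono := hA.strictMonoOn_f_iterate_g N
  have hI : Icc (g 0) (g (g 0)) ⊆ unitI :=
    Icc_subset_Icc hA.g0_pos.le hA.g_g_zero_lt_one.le
  have ha := hI (left_mem_Icc.2 hA.g_zero_lt_g_g_zero.le)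
  have ha₂ := hI (right_mem_Icc.2 hA.g_zero_lt_g_g_zero.le)
  have hx₀I := hI (Ioc_subset_Icc_self hx₀)
  have hψa : f (g^[N] (g 0)) < f (g^[N] x₀) := hmono ha hx₀I hx₀.1
  have hψa₂ : f (g^[N] x₀) ≤ f (g^[N] (g (g 0))) := hmono.monotoneOn hx₀I ha₂ hx₀.2
  rw [hψx₀] at hψa hψa₂
  have hlow : f (g^[N] (g 0)) < α := not_le.1 fun h => hG.breakpoint_notMem hK hA hSo hH hCa hK' N
    ⟨h, hψa.trans hy₀.2⟩
  have hhigh : β ≤ f (g^[N] (g (g 0))) := not_lt.1 fun h => by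
    refine hG.breakpoint_notMem hK hA hSo hH hCa hK' (N + 1) ⟨?_, by rwa [iterate_succ_apply]⟩
    rw [iterate_succ_apply]
    exact hy₀.1.le.trans hψa₂
  have hcont := (hA.contDiff_f_iterate_g N).continuous.continuousOn (s := Icc (g 0) (g (g 0)))
  obtain ⟨A, hA', hψA⟩ := intermediate_value_Ioo hA.g_zero_lt_g_g_zero.le hcont
    ⟨hlow, hαβ.trans_le hhigh⟩
  obtain ⟨B, hB', hψB⟩ := intermediate_value_Ioc hA.g_zero_lt_g_g_zero.le hcont
    ⟨hlow.trans hαβ, hhigh⟩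
  beta_reduce at hψA hψB
  refine ⟨N, A, B, hA'.1, ?_, hB'.2, hψA, hψB⟩
  exact (hmono.lt_iff_lt (hI (Ioo_subset_Icc_self hA')) (hI (Ioc_subset_Icc_self hB'))).1
    (by rwa [hψA, hψB])

/-- The mean value theorem for the branch `f ∘ g^[N]`, which `𝓕` inverts locally, turns
`μ < 𝓕'` into the length estimate. -/
lemma grow (hG : GoodF f g Hf α β) (hK : IsMinimalSet f g K) (hA : MemA f g)
    (hSo : So f g) (hH : HoleAt f g Hf Hg) (hCa : Ca f g Hf Hg) {μ : ℝ}
    (hμ : ∀ y ∈ Fint f 1 \ Hf, DifferentiableAt ℝ (calF f g) y → μ < deriv (calF f g) y)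
    (hK' : Ioo α β ⊆ K) (hαβ : α < β) :
    ∃ A B, A < B ∧ Ioo A B ⊆ K ∧ g 0 ≤ A ∧ B ≤ g (g 0) ∧ μ * (β - α) < B - A := by
  obtain ⟨N, A, B, hA0, hAB, hB, hψA, hψB⟩ := hG.exists_endpoints hK hA hSo hH hCa hK' hαβ
  have hmono := hA.strictMonoOn_f_iterate_g N
  have hI : Icc A B ⊆ unitI :=
    Icc_subset_Icc (hA.g0_pos.le.trans hA0.le) (hB.trans hA.g_g_zero_lt_one.le)
  have hψ : ∀ x ∈ Ioo A B, f (g^[N] x) ∈ Ioo α β := fun x hx =>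
    ⟨hψA ▸ hmono (hI (left_mem_Icc.2 hAB.le)) (hI (Ioo_subset_Icc_self hx)) hx.1,
      hψB ▸ hmono (hI (Ioo_subset_Icc_self hx)) (hI (right_mem_Icc.2 hAB.le)) hx.2⟩
  refine ⟨A, B, hAB, fun x hx => hG.mem_of_apply_mem hK hA hSo hK'
    ⟨hA0.trans hx.1, hx.2.trans_le hB |>.trans hA.g_g_zero_lt_one⟩ (hψ x hx), hA0.le, hB, ?_⟩
  have hψc := hA.contDiff_f_iterate_g N
  obtain ⟨ξ, hξ, hslope⟩ := exists_deriv_eq_slope (fun x => f (g^[N] x)) hAB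
    hψc.continuous.continuousOn fun x _ => (hψc.differentiable one_ne_zero x).differentiableWithinAt
  simp only [hψA, hψB] at hslope
  have hder := (hasStrictDerivAt_calF hA N ⟨hA0.trans hξ.1, hξ.2.trans_le hB⟩
    (hslope ▸ div_ne_zero (sub_pos.2 hαβ).ne' (sub_pos.2 hAB).ne')).hasDerivAt
  have hξμ := hμ _ ⟨Ioo_subset_Icc_self (hG.1 (hψ ξ hξ)), disjoint_left.1 hG.2.1 (hψ ξ hξ)⟩
    hder.differentiableAt
  rwa [hder.deriv, hslope, inv_div, lt_div_iff₀ (sub_pos.2 hαβ)] at hξμ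

end GoodF

namespace GoodG

variable {α β : ℝ}

lemma mem_of_apply_mem (hG : GoodG f g Hg α β) (hK : IsMinimalSet f g K) (hA : MemA f g)
    (hSo : So f g) (hK' : Ioo α β ⊆ K) {M : ℕ} {x : ℝ} (hx : x ∈ Ioo 0 (f 1))
    (hφx : g (f^[M] x) ∈ Ioo α β) : x ∈ K := by
  have hxI : x ∈ unitI := ⟨hx.1.le, hx.2.le.trans hA.f1_lt_one.le⟩
  refine hK.mem_of_iterate_f_mem hA (n := M) hxI
    ((hA.strictMonoOn_f hxI (hA.f_maps one_mem_unitI) hx.2).trans hSo.1) ?_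
  exact hK.mem_of_g_mem hA (hA.f_maps.iterate M hxI) (hK' hφx) isOpen_Ioo hφx hG.2.2

lemma breakpoint_notMem (hG : GoodG f g Hg α β) (hK : IsMinimalSet f g K) (hA : MemA f g)
    (hSo : So f g) (hH : HoleAt f g Hf Hg) (hCa : Ca f g Hf Hg) (hK' : Ioo α β ⊆ K) (M : ℕ) :
    g (f^[M] (f 1)) ∉ Ioc α β := by
  intro ⟨hα, hβ⟩
  have hφ := (hA.contDiff_g_iterate_f M).continuous.tendsto (f 1)
  obtain ⟨l, u, ⟨hl, hu⟩, hlu⟩ := (hφ.eventually_const_lt hα).exists_Ioo_subset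
  refine hK.not_Ioo_subset_f_one hA hH hCa (max_lt hl hA.f_f_one_lt) fun x hx => ?_
  have hx0 : 0 < x := hA.f_f_one_pos.trans_le (le_max_right _ _) |>.trans hx.1
  have hxI : x ∈ unitI := ⟨hx0.le, hx.2.le.trans hA.f1_lt_one.le⟩
  exact hG.mem_of_apply_mem hK hA hSo hK' ⟨hx0, hx.2⟩
    ⟨hlu ⟨(le_max_left _ _).trans_lt hx.1, hx.2.trans hu⟩,
      (hA.strictMonoOn_g_iterate_f M hxI (hA.f_maps one_mem_unitI) hx.2).trans_le hβ⟩

lemma exists_endpoints (hG : GoodG f g Hg α β) (hK : IsMinimalSet f g K) (hA : MemA f g)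
    (hSo : So f g) (hH : HoleAt f g Hf Hg) (hCa : Ca f g Hf Hg) (hK' : Ioo α β ⊆ K)
    (hαβ : α < β) : ∃ M A B, f (f 1) ≤ A ∧ A < B ∧ B < f 1 ∧
      g (f^[M] A) = α ∧ g (f^[M] B) = β := by
  have hy₀ : (α + β) / 2 ∈ Ioo α β := ⟨by linarith, by linarith⟩
  obtain ⟨M, x₀, hx₀, hφx₀⟩ := exists_eq_g_iterate_f hA (Ioo_subset_Ioc_self (hG.1 hy₀))
  have hmono := hA.strictMonoOn_g_iterate_f M
  have hI : Icc (f (f 1)) (f 1) ⊆ unitI :=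
    Icc_subset_Icc hA.f_f_one_pos.le hA.f1_lt_one.le
  have hb₂ := hI (left_mem_Icc.2 hA.f_f_one_lt.le)
  have hb := hI (right_mem_Icc.2 hA.f_f_one_lt.le)
  have hx₀I := hI (Ico_subset_Icc_self hx₀)
  have hφb : g (f^[M] x₀) < g (f^[M] (f 1)) := hmono hx₀I hb hx₀.2
  have hφb₂ : g (f^[M] (f (f 1))) ≤ g (f^[M] x₀) := hmono.monotoneOn hb₂ hx₀I hx₀.1
  rw [hφx₀] at hφb hφb₂
  have hhigh : β < g (f^[M] (f 1)) := not_le.1 fun h => hG.breakpoint_notMem hK hA hSo hH hCa hK' M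
    ⟨hy₀.1.trans hφb, h⟩
  have hlow : g (f^[M] (f (f 1))) ≤ α := not_lt.1 fun h => by
    refine hG.breakpoint_notMem hK hA hSo hH hCa hK' (M + 1) ⟨by rwa [iterate_succ_apply], ?_⟩
    rw [iterate_succ_apply]
    exact hφb₂.trans hy₀.2.le
  have hcont := (hA.contDiff_g_iterate_f M).continuous.continuousOn (s := Icc (f (f 1)) (f 1))
  obtain ⟨A, hA', hφA⟩ := intermediate_value_Ico hA.f_f_one_lt.le hcont
    ⟨hlow, hαβ.trans hhigh⟩
  obtain ⟨B, hB', hφB⟩ := intermediate_value_Ioo hA.f_f_one_lt.le hcont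
    ⟨hlow.trans_lt hαβ, hhigh⟩
  beta_reduce at hφA hφB
  refine ⟨M, A, B, hA'.1, ?_, hB'.2, hφA, hφB⟩
  exact (hmono.lt_iff_lt (hI (Ico_subset_Icc_self hA')) (hI (Ioo_subset_Icc_self hB'))).1
    (by rwa [hφA, hφB])

lemma grow (hG : GoodG f g Hg α β) (hK : IsMinimalSet f g K) (hA : MemA f g)
    (hSo : So f g) (hH : HoleAt f g Hf Hg) (hCa : Ca f g Hf Hg) {μ : ℝ}
    (hμ : ∀ y ∈ Gint g 1 \ Hg, DifferentiableAt ℝ (calG f g) y → μ < deriv (calG f g) y)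
    (hK' : Ioo α β ⊆ K) (hαβ : α < β) :
    ∃ A B, A < B ∧ Ioo A B ⊆ K ∧ f (f 1) ≤ A ∧ B ≤ f 1 ∧ μ * (β - α) < B - A := by
  obtain ⟨M, A, B, hA0, hAB, hB, hφA, hφB⟩ := hG.exists_endpoints hK hA hSo hH hCa hK' hαβ
  have hmono := hA.strictMonoOn_g_iterate_f M
  have hI : Icc A B ⊆ unitI :=
    Icc_subset_Icc (hA.f_f_one_pos.le.trans hA0) (hB.le.trans hA.f1_lt_one.le)
  have hφ : ∀ x ∈ Ioo A B, g (f^[M] x) ∈ Ioo α β := fun x hx =>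
    ⟨hφA ▸ hmono (hI (left_mem_Icc.2 hAB.le)) (hI (Ioo_subset_Icc_self hx)) hx.1,
      hφB ▸ hmono (hI (Ioo_subset_Icc_self hx)) (hI (right_mem_Icc.2 hAB.le)) hx.2⟩
  refine ⟨A, B, hAB, fun x hx => hG.mem_of_apply_mem hK hA hSo hK'
    ⟨hA.f_f_one_pos.trans_le hA0 |>.trans hx.1, hx.2.trans hB⟩ (hφ x hx), hA0, hB.le, ?_⟩
  have hφc := hA.contDiff_g_iterate_f M
  obtain ⟨ξ, hξ, hslope⟩ := exists_deriv_eq_slope (fun x => g (f^[M] x)) hAB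
    hφc.continuous.continuousOn fun x _ => (hφc.differentiable one_ne_zero x).differentiableWithinAt
  simp only [hφA, hφB] at hslope
  have hder := (hasStrictDerivAt_calG hA M ⟨hA0.trans_lt hξ.1, hξ.2.trans hB⟩
    (hslope ▸ div_ne_zero (sub_pos.2 hαβ).ne' (sub_pos.2 hAB).ne')).hasDerivAt
  have hξμ := hμ _ ⟨Ioo_subset_Icc_self (hG.1 (hφ ξ hξ)), disjoint_left.1 hG.2.1 (hφ ξ hξ)⟩
    hder.differentiableAt
  rwa [hder.deriv, hslope, inv_div, lt_div_iff₀ (sub_pos.2 hαβ)] at hξμ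

end GoodG

namespace IsMinimalSet

variable {α β : ℝ}

lemma Icc_subset_unitI (hK : IsMinimalSet f g K) (hαβ : α < β) (hK' : Ioo α β ⊆ K) :
    Icc α β ⊆ unitI :=
  (closure_Ioo hαβ.ne ▸ hK.isClosed.closure_subset_iff.2 hK').trans hK.2.1

lemma good_of_subset_ovW (hK : IsMinimalSet f g K) (hA : MemA f g) (hSo : So f g)
    (hH : HoleAt f g Hf Hg) (hCa : Ca f g Hf Hg) (hK' : Ioo α β ⊆ K)
    (hW : Ioo α β ⊆ Ioo (g 0) (f 1)) : GoodF f g Hf α β ∨ GoodG f g Hg α β := by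
  rcases hK.subset_Rf_or_subset_Rg hA hH hCa hK' (hW.trans Ioo_subset_Icc_self) with h | h
  · exact Or.inr ⟨hW.trans (Ioo_subset_Ioo_right hSo.2.le), hK.disjoint_Hg hA hH isOpen_Ioo hK',
      fun z hz hfz => f_notMem_Rf hA hH hz (h hfz)⟩
  · exact Or.inl ⟨hW.trans (Ioo_subset_Ioo_left hSo.1.le), hK.disjoint_Hf hA hH isOpen_Ioo hK',
      fun z hz hgz => g_notMem_Rg hA hH hz (h hgz)⟩

lemma good_of_subset_Gint (hK : IsMinimalSet f g K) (hA : MemA f g) (hSo : So f g)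
    (hH : HoleAt f g Hf Hg) (hCa : Ca f g Hf Hg) (hK' : Ioo α β ⊆ K) (hα : g 0 ≤ α)
    (hβ : β ≤ g (g 0)) : GoodF f g Hf α β ∨ GoodG f g Hg α β := by
  rcases le_or_gt β (f 1) with hβb | hβb
  · exact hK.good_of_subset_ovW hA hSo hH hCa hK' (Ioo_subset_Ioo hα hβb)
  rcases lt_or_ge α (f 1) with hαb | hαb
  · exact absurd ((Ioo_subset_Ioo_right hβb.le).trans hK')
      (hK.not_Ioo_subset_f_one hA hH hCa hαb)
  · exact Or.inr ⟨Ioo_subset_Ioo hα hβ, hK.disjoint_Hg hA hH isOpen_Ioo hK', fun z hz hfz =>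
      (hA.f_le_f_one (zeroOrbit_subset_unitI hA hz)).not_gt (hαb.trans_lt hfz.1)⟩

lemma good_of_subset_Fint (hK : IsMinimalSet f g K) (hA : MemA f g) (hSo : So f g)
    (hH : HoleAt f g Hf Hg) (hCa : Ca f g Hf Hg) (hK' : Ioo α β ⊆ K) (hα : f (f 1) ≤ α)
    (hβ : β ≤ f 1) : GoodF f g Hf α β ∨ GoodG f g Hg α β := by
  rcases le_or_gt (g 0) α with haα | haα
  · exact hK.good_of_subset_ovW hA hSo hH hCa hK' (Ioo_subset_Ioo haα hβ)
  rcases lt_or_ge (g 0) β with haβ | haβ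
  · exact absurd ((Ioo_subset_Ioo_left haα.le).trans hK')
      (hK.not_Ioo_g_zero_subset hA hH hCa haβ)
  · exact Or.inl ⟨Ioo_subset_Ioo hα hβ, hK.disjoint_Hf hA hH isOpen_Ioo hK', fun z hz hgz =>
      (hA.g_zero_le_g (zeroOrbit_subset_unitI hA hz)).not_gt (hgz.2.trans_le haβ)⟩

/-- Growing a good interval of `K` by the factor `μ > 1` gives again a good interval of `K`. -/
lemma not_good (hK : IsMinimalSet f g K) (hA : MemA f g) (hSo : So f g) (hH : HoleAt f g Hf Hg)
    (hCa : Ca f g Hf Hg) (hEe : Ee f g Hf Hg) (hαβ : α < β) (hK' : Ioo α β ⊆ K)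
    (hG : GoodF f g Hf α β ∨ GoodG f g Hg α β) : False := by
  obtain ⟨μ, hμ, hμF, hμG⟩ := hEe
  have key : ∀ n : ℕ, ∀ α β, α < β → Ioo α β ⊆ K → GoodF f g Hf α β ∨ GoodG f g Hg α β →
      μ ^ n * (β - α) ≤ 1 := by
    intro n
    induction n with
    | zero =>
      intro α β hαβ hK' _
      have := (Icc_subset_Icc_iff hαβ.le).1 (hK.Icc_subset_unitI hαβ hK')
      linarith [this.1, this.2]
    | succ n ih =>
      intro α β hαβ hK' hG
      obtain ⟨A, B, hAB, hKAB, hgood, hgrow⟩ : ∃ A B, A < B ∧ Ioo A B ⊆ K ∧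
          (GoodF f g Hf A B ∨ GoodG f g Hg A B) ∧ μ * (β - α) < B - A := by
        rcases hG with hG | hG
        · obtain ⟨A, B, hAB, hKAB, hA0, hB, hgrow⟩ := hG.grow hK hA hSo hH hCa hμF hK' hαβ
          exact ⟨A, B, hAB, hKAB, hK.good_of_subset_Gint hA hSo hH hCa hKAB hA0 hB, hgrow⟩
        · obtain ⟨A, B, hAB, hKAB, hA0, hB, hgrow⟩ := hG.grow hK hA hSo hH hCa hμG hK' hαβ
          exact ⟨A, B, hAB, hKAB, hK.good_of_subset_Fint hA hSo hH hCa hKAB hA0 hB, hgrow⟩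
      calc μ ^ (n + 1) * (β - α) = μ ^ n * (μ * (β - α)) := by ring
        _ ≤ μ ^ n * (B - A) := by gcongr
        _ ≤ 1 := ih A B hAB hKAB hgood
  obtain ⟨n, hn⟩ := pow_unbounded_of_one_lt (β - α)⁻¹ hμ
  have hlen := key n α β hαβ hK' hG
  have := mul_lt_mul_of_pos_right hn (sub_pos.2 hαβ)
  rw [inv_mul_cancel₀ (sub_pos.2 hαβ).ne'] at this
  linarith

/-- `g` or `f` moves an interval of `K` into `G₁` or `F₁`, where it is good. -/
lemma not_Ioo_subset (hK : IsMinimalSet f g K) (hA : MemA f g) (hSo : So f g)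
    (hH : HoleAt f g Hf Hg) (hCa : Ca f g Hf Hg) (hEe : Ee f g Hf Hg) (hαβ : α < β) :
    ¬ Ioo α β ⊆ K := by
  intro hK'
  have hI := hK.Icc_subset_unitI hαβ hK'
  have hαI := hI (left_mem_Icc.2 hαβ.le)
  have hβI := hI (right_mem_Icc.2 hαβ.le)
  obtain ⟨A, B, hAB, hKAB, hgood⟩ : ∃ A B, A < B ∧ Ioo A B ⊆ K ∧
      (GoodF f g Hf A B ∨ GoodG f g Hg A B) := by
    rcases le_or_gt β (g 0) with hβa | hβa
    · have hKg : Ioo (g α) (g β) ⊆ K :=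
        (intermediate_value_Ioo hαβ.le hA.continuous_g.continuousOn).trans
          (image_subset_iff.2 fun x hx => hK.g_mem (hK' hx))
      exact ⟨g α, g β, hA.strictMonoOn_g hαI hβI hαβ, hKg, hK.good_of_subset_Gint hA hSo hH hCa
        hKg (hA.g_zero_le_g hαI) (hA.strictMonoOn_g.monotoneOn hβI (hA.g_maps zero_mem_unitI) hβa)⟩
    rcases le_or_gt (g (g 0)) α with haα | haα
    · have hKf : Ioo (f α) (f β) ⊆ K :=
        (intermediate_value_Ioo hαβ.le hA.continuous_f.continuousOn).trans
          (image_subset_iff.2 fun x hx => hK.f_mem (hK' hx))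
      exact ⟨f α, f β, hA.strictMonoOn_f hαI hβI hαβ, hKf, hK.good_of_subset_Fint hA hSo hH hCa
        hKf (hA.strictMonoOn_f.monotoneOn (hA.f_maps one_mem_unitI) hαI (hSo.2.le.trans haα))
        (hA.f_le_f_one hβI)⟩
    · have hsub : Ioo (max α (g 0)) (min β (g (g 0))) ⊆ K :=
        (Ioo_subset_Ioo (le_max_left _ _) (min_le_left _ _)).trans hK'
      exact ⟨_, _, max_lt (lt_min hαβ haα) (lt_min hβa hA.g_zero_lt_g_g_zero), hsub,
        hK.good_of_subset_Gint hA hSo hH hCa hsub (le_max_right _ _) (min_le_right _ _)⟩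
  exact hK.not_good hA hSo hH hCa hEe hAB hKAB hgood

end IsMinimalSet

/-- if `(f,g) ∈ 𝒞`, then the minimal set `K` has empty interior; more
precisely every nonempty open interval `J ⊆ I` containing a point of `K` contains a
nonempty open interval `L` disjoint from `K`. -/
theorem minimal_set_empty_interior (f g : ℝ → ℝ) (Hf Hg K : Set ℝ)
    (hC : MemC f g Hf Hg) (hK : IsMinimalSet f g K) :
    interior K = ∅ ∧
    ∀ x ∈ K, ∀ J : Set ℝ, IsOpenInterval J → J ⊆ unitI → x ∈ J →
      ∃ L : Set ℝ, IsOpenInterval L ∧ L ⊆ J ∧ L ∩ K = ∅ := by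
  obtain ⟨hA, hSo, hH, hEe, hCa⟩ := hC
  have hJ : ∀ α β : ℝ, α < β → ¬ Ioo α β ⊆ K := fun _ _ =>
    hK.not_Ioo_subset hA hSo hH hCa hEe
  refine ⟨eq_empty_of_forall_notMem fun x hx => ?_, fun x _ J ⟨u, v, huv, hJuv⟩ _ _ => ?_⟩
  · obtain ⟨l, r, hlr, hsub⟩ := mem_nhds_iff_exists_Ioo_subset.1 (mem_interior_iff_mem_nhds.1 hx)
    exact hJ l r (hlr.1.trans hlr.2) hsub
  · subst hJuv
    obtain ⟨y, hy, hyK⟩ := not_subset.1 (hJ u v huv)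
    obtain ⟨l, r, hlr, hsub⟩ := mem_nhds_iff_exists_Ioo_subset.1
      (inter_mem (Ioo_mem_nhds hy.1 hy.2) (hK.isClosed.isOpen_compl.mem_nhds hyK))
    exact ⟨Ioo l r, ⟨l, r, hlr.1.trans hlr.2, rfl⟩, fun z hz => (hsub hz).1,
      eq_empty_of_forall_notMem fun z hz => (hsub hz.1).2 hz.2⟩

end IFSPaper
end
end
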